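/- arXiv:2510.07870 — 7 statements merged into one kernel-verified Lean document; each statement's English description precedes it below -/
import Mathlib

section
/- Let k = 4 and ℓ = 5, and set s = 2^{1-4} = 1/8 and β = (4+1)/2^{4-1} = 5/8. Define Q = (1/2)·(β^5 − s^5) + 2·√( (1/2)·s^5 · (1 − (1/2)·β^5) ). Then 1/Q > 2^4 · ln 2 (equivalently Q · 2^4 · ln 2 < 1), i.e. the MIDDLE-HEAVY threshold α_SYM(4,5) = 1/Q strictly exceeds the first-moment bound 2^4 ln 2. -/
/-- For `k = 4`, `ℓ = 5`, with `s = 2^{1-4} = 1/8`, `β = (4+1)/2^{4-1} = 5/8`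
and `Q = (1/2)(β^5 - s^5) + 2√((1/2) s^5 (1 - (1/2) β^5))`, the MIDDLE-HEAVY threshold
`α_SYM(4,5) = 1/Q` strictly exceeds the first-moment bound `2^4 ln 2`. -/
theorem stmt0 :
    let s : ℝ := 2 ^ ((1 : ℤ) - 4)
    let β : ℝ := (4 + 1) / 2 ^ (4 - 1 : ℕ)
    let Q : ℝ := (1 / 2) * (β ^ 5 - s ^ 5)
      + 2 * Real.sqrt ((1 / 2) * s ^ 5 * (1 - (1 / 2) * β ^ 5))
    s = 1 / 8 ∧ β = 5 / 8 ∧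
      (2 : ℝ) ^ (4 : ℕ) * Real.log 2 < 1 / Q ∧
      Q * ((2 : ℝ) ^ (4 : ℕ) * Real.log 2) < 1 := by
  intro s β Q
  have hs : s = 1 / 8 := by norm_num [s]
  have hβ : β = 5 / 8 := by norm_num [β]
  have harg : (1 / 2) * s ^ 5 * (1 - (1 / 2) * β ^ 5) = 62411 / 4294967296 := by
    rw [hs, hβ]; norm_num
  have hsqrt_lt : Real.sqrt ((1 / 2) * s ^ 5 * (1 - (1 / 2) * β ^ 5)) < 250 / 65536 := by
    rw [harg]
    rw [show (250 : ℝ) / 65536 = Real.sqrt ((250 / 65536) ^ 2) from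
      (Real.sqrt_sq (by norm_num)).symm]
    apply Real.sqrt_lt_sqrt (by norm_num) (by norm_num)
  have hsqrt_nonneg : 0 ≤ Real.sqrt ((1 / 2) * s ^ 5 * (1 - (1 / 2) * β ^ 5)) :=
    Real.sqrt_nonneg _
  have hQlt : Q < 453 / 8192 := by
    have : (1 / 2 : ℝ) * (β ^ 5 - s ^ 5) = 1562 / 32768 := by rw [hs, hβ]; norm_num
    simp only [Q, this]
    nlinarith [hsqrt_lt]
  have hQpos : 0 < Q := by
    have : (0 : ℝ) < (1 / 2) * (β ^ 5 - s ^ 5) := by rw [hs, hβ]; norm_num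
    simp only [Q]; nlinarith
  have hlog : Real.log 2 < 0.6931471808 := Real.log_two_lt_d9
  have hlogpos : 0 < Real.log 2 := Real.log_pos (by norm_num)
  have hkey : Q * ((2 : ℝ) ^ (4 : ℕ) * Real.log 2) < 1 := by
    have h16 : ((2 : ℝ) ^ (4 : ℕ)) = 16 := by norm_num
    rw [h16]
    have hL16 : (0 : ℝ) < 16 * Real.log 2 := by positivity
    calc Q * (16 * Real.log 2) < 453 / 8192 * (16 * Real.log 2) :=
          mul_lt_mul_of_pos_right hQlt hL16
      _ < 453 / 8192 * (16 * 0.6931471808) := by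
          apply mul_lt_mul_of_pos_left _ (by norm_num)
          linarith
      _ < 1 := by norm_num
  refine ⟨hs, hβ, ?_, hkey⟩
  rw [lt_div_iff₀ hQpos]
  nlinarith [hkey]
end

section
/- For every integer k ≥ 6, with s = 2^{1−k}, β = (k+1)/2^{k−1} and Q(k) = (1/2)·(β^3 − s^3) + 2·√( (1/2)·s^3 · (1 − (1/2)·β^3) ), one has 1/Q(k) > 2^k · ln 2 (equivalently Q(k) · 2^k · ln 2 < 1), i.e. with ℓ = 3 choices the MIDDLE-HEAVY threshold α_SYM(k,3) strictly exceeds the first-moment bound 2^k ln 2 for all k ≥ 6. -/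
private lemma aux1 : ∀ k : ℕ, 6 ≤ k → 8 * (k + 1) ^ 3 ≤ 2 ^ (2 * k) := by
  intro k hk
  induction k, hk using Nat.le_induction with
  | base => norm_num
  | succ n hn ih =>
    have h3 : 1 ≤ n ^ 3 := Nat.one_le_pow 3 n (by omega)
    have h1 : (n + 1 + 1) ^ 3 ≤ 4 * (n + 1) ^ 3 := by nlinarith [h3]
    have h2 : 2 ^ (2 * (n + 1)) = 4 * 2 ^ (2 * n) := by ring
    omega

private lemma aux2 : ∀ k : ℕ, 6 ≤ k → 2 * (k + 1) ≤ 2 ^ k := by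
  intro k hk
  induction k, hk using Nat.le_induction with
  | base => norm_num
  | succ n hn ih =>
    have : 2 ^ (n + 1) = 2 * 2 ^ n := by ring
    omega

/-- For every integer `k ≥ 6`, with `s = 2^{1-k}`, `β = (k+1)/2^{k-1}` and
`Q(k) = (1/2)(β^3 - s^3) + 2√((1/2) s^3 (1 - (1/2) β^3))`, the MIDDLE-HEAVY threshold
with `ℓ = 3` choices, `α_SYM(k,3) = 1/Q(k)`, strictly exceeds the first-moment bound
`2^k ln 2`. -/
theorem stmt2 (k : ℕ) (hk : 6 ≤ k) :
    let s : ℝ := 2 ^ ((1 : ℤ) - (k : ℤ))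
    let β : ℝ := ((k : ℝ) + 1) / 2 ^ (k - 1 : ℕ)
    let Q : ℝ := (1 / 2) * (β ^ 3 - s ^ 3)
      + 2 * Real.sqrt ((1 / 2) * s ^ 3 * (1 - (1 / 2) * β ^ 3))
    (2 : ℝ) ^ (k : ℕ) * Real.log 2 < 1 / Q ∧
      Q * ((2 : ℝ) ^ (k : ℕ) * Real.log 2) < 1 := by
  intro s β Q
  set t : ℝ := (2 : ℝ) ^ (k : ℕ) with ht_def
  have ht0 : (0 : ℝ) < t := by positivity
  have hkR : (6 : ℝ) ≤ (k : ℝ) := by exact_mod_cast hk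
  have ht64 : (64 : ℝ) ≤ t := by
    have : (2 : ℕ) ^ 6 ≤ 2 ^ k := Nat.pow_le_pow_right (by norm_num) hk
    have := (Nat.cast_le (α := ℝ)).mpr this
    push_cast at this
    norm_num at this
    simpa [ht_def] using this
  -- s = 2 / t
  have hs : s = 2 / t := by
    show (2 : ℝ) ^ ((1 : ℤ) - (k : ℤ)) = 2 / t
    rw [zpow_sub₀ (two_ne_zero), zpow_one, zpow_natCast]
  -- β = 2 * (k+1) / t
  have hβ : β = 2 * ((k : ℝ) + 1) / t := by
    show ((k : ℝ) + 1) / 2 ^ (k - 1 : ℕ) = 2 * ((k : ℝ) + 1) / t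
    have hk1 : k - 1 + 1 = k := by omega
    have h2 : (2 : ℝ) ^ (k - 1 : ℕ) * 2 = t := by
      rw [← pow_succ, hk1]
    field_simp
    nlinarith [pow_pos (show (0:ℝ) < 2 by norm_num) (k - 1)]
  -- key numeric bounds
  have hK3 : 8 * ((k : ℝ) + 1) ^ 3 ≤ t ^ 2 := by
    have := aux1 k hk
    have := (Nat.cast_le (α := ℝ)).mpr this
    push_cast at this
    calc 8 * ((k : ℝ) + 1) ^ 3 ≤ (2 : ℝ) ^ (2 * k) := this
      _ = t ^ 2 := by rw [ht_def, mul_comm, pow_mul]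
  have hK2 : 2 * ((k : ℝ) + 1) ≤ t := by
    have := aux2 k hk
    have := (Nat.cast_le (α := ℝ)).mpr this
    push_cast at this
    simpa [ht_def] using this
  have hβ0 : 0 ≤ β := by
    rw [hβ]; positivity
  have hβ1 : β ≤ 1 := by
    rw [hβ, div_le_one ht0]; linarith
  have hs0 : 0 < s := by rw [hs]; positivity
  -- bound the sqrt term
  have hsqrt : Real.sqrt ((1 / 2) * s ^ 3 * (1 - (1 / 2) * β ^ 3)) ≤ 1 / (4 * t) := by
    have harg : (1 / 2) * s ^ 3 * (1 - (1 / 2) * β ^ 3) ≤ (1 / (4 * t)) ^ 2 := by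
      have hb3 : 0 ≤ β ^ 3 := pow_nonneg hβ0 3
      have h1 : (1 - (1 / 2) * β ^ 3) ≤ 1 := by linarith
      have h2 : 0 ≤ (1 / 2) * s ^ 3 := by positivity
      have h3 : (1 / 2) * s ^ 3 * (1 - (1 / 2) * β ^ 3) ≤ (1 / 2) * s ^ 3 := by
        nlinarith
      have h4 : (1 / 2) * s ^ 3 ≤ (1 / (4 * t)) ^ 2 := by
        rw [hs]
        have key : (1 / (4 * t)) ^ 2 - (1 / 2) * (2 / t) ^ 3 = (t - 64) / (16 * t ^ 3) := by
          field_simp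
          ring
        have hnn : 0 ≤ (t - 64) / (16 * t ^ 3) :=
          div_nonneg (by linarith) (by positivity)
        linarith
      linarith
    calc Real.sqrt ((1 / 2) * s ^ 3 * (1 - (1 / 2) * β ^ 3))
        ≤ Real.sqrt ((1 / (4 * t)) ^ 2) := Real.sqrt_le_sqrt harg
      _ = 1 / (4 * t) := Real.sqrt_sq (by positivity)
  have hβs : s < β := by
    rw [hs, hβ, div_lt_div_iff₀ ht0 ht0]
    nlinarith [ht0, hkR]
  have hQpos : 0 < Q := by
    have h1 : s ^ 3 < β ^ 3 := pow_lt_pow_left₀ hβs hs0.le (by norm_num)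
    have h2 : 0 ≤ Real.sqrt ((1 / 2) * s ^ 3 * (1 - (1 / 2) * β ^ 3)) := Real.sqrt_nonneg _
    show 0 < (1 / 2) * (β ^ 3 - s ^ 3)
      + 2 * Real.sqrt ((1 / 2) * s ^ 3 * (1 - (1 / 2) * β ^ 3))
    linarith
  -- main bound: Q * t ≤ 1
  have hQt : Q * t ≤ 1 := by
    have hQle : Q ≤ (1 / 2) * (β ^ 3 - s ^ 3) + 2 * (1 / (4 * t)) := by
      show (1 / 2) * (β ^ 3 - s ^ 3)
          + 2 * Real.sqrt ((1 / 2) * s ^ 3 * (1 - (1 / 2) * β ^ 3)) ≤ _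
      linarith [hsqrt]
    have hC : ((1 / 2) * (β ^ 3 - s ^ 3) + 2 * (1 / (4 * t))) * t ≤ 1 := by
      rw [hs, hβ]
      have hid : ((1 / 2) * ((2 * ((k : ℝ) + 1) / t) ^ 3 - (2 / t) ^ 3) + 2 * (1 / (4 * t))) * t
          = (4 * ((k : ℝ) + 1) ^ 3 - 4) / t ^ 2 + 1 / 2 := by
        field_simp
        ring
      rw [hid]
      have hd : (4 * ((k : ℝ) + 1) ^ 3 - 4) / t ^ 2 ≤ 1 / 2 := by
        rw [div_le_iff₀ (by positivity)]
        nlinarith [hK3]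
      linarith
    exact le_trans (mul_le_mul_of_nonneg_right hQle ht0.le) hC
  have hlog : Real.log 2 < 1 := by
    have := Real.log_two_lt_d9
    linarith
  have hlog0 : 0 < Real.log 2 := Real.log_pos (by norm_num)
  have hmain : Q * (t * Real.log 2) < 1 := by
    have h1 : Q * t * Real.log 2 ≤ 1 * Real.log 2 :=
      mul_le_mul_of_nonneg_right hQt (le_of_lt hlog0)
    calc Q * (t * Real.log 2) = Q * t * Real.log 2 := by ring
      _ ≤ 1 * Real.log 2 := h1
      _ = Real.log 2 := one_mul _
      _ < 1 := hlog
  constructor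
  · rw [lt_div_iff₀ hQpos]
    calc t * Real.log 2 * Q = Q * (t * Real.log 2) := by ring
      _ < 1 := hmain
  · exact hmain
end

section
/- For every integer k ≥ 4, with ℓ = 3 and p0 = 2^{−3k}, p1 = 2^{−3k}·((k+1)^3 − 1), p2 = 1 − 2^{−3k}·(k+1)^3, and Q(k) = p1 + 2·√(p0·p2), one has 1/Q(k) > 2^k · ln 2 (equivalently Q(k) · 2^k · ln 2 < 1); i.e. the max-positives branch of the Threshold-Symmetric Hybrid rule with 3 choices certifies a satisfiability threshold strictly exceeding the first-moment bound 2^k ln 2. -/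
/-! With `x = 2^{-3k} = 8^{-k}` one has `p₁ ≤ (k+1)³ x` and `√(p₀ p₂) ≤ √x`, so
`Q · 2^k ≤ (k+1)³ / 4^k + 2 · 2^k / √(8^k)`. For `k ≥ 4` each summand is at most `1/2`
(because `2 (k+1)³ ≤ 4^k` and `16 ≤ 2^k`), hence `Q · 2^k ≤ 1`, and `ln 2 < 1` makes the
inequality strict. -/

open Real

lemma two_mul_succ_pow_three_le_four_pow {k : ℕ} (hk : 4 ≤ k) : 2 * (k + 1) ^ 3 ≤ 4 ^ k := by
  induction k, hk using Nat.le_induction with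
  | base => norm_num
  | succ n hn ih =>
    calc 2 * (n + 1 + 1) ^ 3 ≤ 4 * (2 * (n + 1) ^ 3) := by nlinarith [sq_nonneg n]
      _ ≤ 4 * 4 ^ n := by omega
      _ = 4 ^ (n + 1) := by ring

lemma two_zpow_neg_three_mul (k : ℕ) : (2 : ℝ) ^ (-(3 * (k : ℤ))) = ((8 : ℝ) ^ k)⁻¹ := by
  rw [zpow_neg, show 3 * (k : ℤ) = ((3 * k : ℕ) : ℤ) by push_cast; ring, zpow_natCast, pow_mul]
  norm_num

lemma inv_eight_pow_mul_succ_pow_three_mul_two_pow_le {k : ℕ} (hk : 4 ≤ k) :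
    ((8 : ℝ) ^ k)⁻¹ * ((k : ℝ) + 1) ^ 3 * 2 ^ k ≤ 1 / 2 := by
  have hcube : 2 * ((k : ℝ) + 1) ^ 3 ≤ 4 ^ k := by
    exact_mod_cast two_mul_succ_pow_three_le_four_pow hk
  have h8 : (8 : ℝ) ^ k = 4 ^ k * 2 ^ k := by rw [← mul_pow]; norm_num
  rw [h8, show (4 ^ k * 2 ^ k : ℝ)⁻¹ * ((k : ℝ) + 1) ^ 3 * 2 ^ k = ((k : ℝ) + 1) ^ 3 / 4 ^ k by
    field_simp, div_le_iff₀ (by positivity)]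
  linarith

lemma two_mul_sqrt_inv_eight_pow_mul_two_pow_le {k : ℕ} (hk : 4 ≤ k) :
    2 * √((8 : ℝ) ^ k)⁻¹ * 2 ^ k ≤ 1 / 2 := by
  have h16 : (16 : ℝ) ≤ 2 ^ k := by
    calc (16 : ℝ) = 2 ^ 4 := by norm_num
      _ ≤ 2 ^ k := pow_le_pow_right₀ (by norm_num) hk
  have hsqrt : 4 * 2 ^ k ≤ √((8 : ℝ) ^ k) := by
    rw [Real.le_sqrt (by positivity) (by positivity),
      show (8 : ℝ) ^ k = 2 ^ k * 4 ^ k by rw [← mul_pow]; norm_num,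
      show (4 * (2 : ℝ) ^ k) ^ 2 = 16 * 4 ^ k by rw [mul_pow, ← pow_mul, mul_comm k, pow_mul]; norm_num]
    gcongr
  rw [Real.sqrt_inv, mul_right_comm, mul_inv_le_iff₀ (by positivity)]
  linarith

lemma mul_log_two_lt_one_div {Q t : ℝ} (hQ : 0 < Q) (ht : Q * t ≤ 1) :
    t * log 2 < 1 / Q ∧ Q * (t * log 2) < 1 := by
  have hlog : log 2 < 1 := by linarith [Real.log_two_lt_d9]
  have hmul : Q * (t * log 2) < 1 := by
    rw [← mul_assoc]
    nlinarith [Real.log_pos one_lt_two]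
  exact ⟨by rwa [lt_div_iff₀ hQ, mul_comm], hmul⟩

/-- For every integer `k ≥ 4`, with `ℓ = 3` and
`p₀ = 2^{-3k}`, `p₁ = 2^{-3k}((k+1)^3 - 1)`, `p₂ = 1 - 2^{-3k}(k+1)^3`,
and `Q(k) = p₁ + 2√(p₀ p₂)`, one has `1/Q(k) > 2^k ln 2` (equivalently
`Q(k) · 2^k · ln 2 < 1`): the max-positives branch of the Threshold-Symmetric
Hybrid rule with 3 choices certifies a threshold exceeding the first-moment
bound `2^k ln 2`. -/
theorem stmt3 (k : ℕ) (hk : 4 ≤ k) :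
    let p0 : ℝ := 2 ^ (-(3 * (k : ℤ)))
    let p1 : ℝ := 2 ^ (-(3 * (k : ℤ))) * (((k : ℝ) + 1) ^ 3 - 1)
    let p2 : ℝ := 1 - 2 ^ (-(3 * (k : ℤ))) * ((k : ℝ) + 1) ^ 3
    let Q : ℝ := p1 + 2 * Real.sqrt (p0 * p2)
    (2 : ℝ) ^ (k : ℕ) * Real.log 2 < 1 / Q ∧
      Q * ((2 : ℝ) ^ (k : ℕ) * Real.log 2) < 1 := by
  intro p0 p1 p2 Q
  set x : ℝ := ((8 : ℝ) ^ k)⁻¹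
  set c : ℝ := ((k : ℝ) + 1) ^ 3
  have hQ : Q = x * (c - 1) + 2 * √(x * (1 - x * c)) := by
    simp only [Q, p0, p1, p2, two_zpow_neg_three_mul, x, c]
  have hx : 0 < x := by positivity
  have hc : 1 < c := by
    have : (0 : ℝ) < k := by exact_mod_cast (by omega : 0 < k)
    exact one_lt_pow₀ (by linarith) (by norm_num)
  have hsqrt : √(x * (1 - x * c)) ≤ √x :=
    Real.sqrt_le_sqrt (by nlinarith [mul_pos hx hx])
  have hQpos : 0 < Q := by
    rw [hQ]; nlinarith [Real.sqrt_nonneg (x * (1 - x * c))]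
  have hQle : Q * 2 ^ k ≤ 1 := by
    calc Q * 2 ^ k ≤ x * c * 2 ^ k + 2 * √x * 2 ^ k := by
          rw [hQ, add_mul]
          gcongr; linarith
      _ ≤ 1 / 2 + 1 / 2 := add_le_add (inv_eight_pow_mul_succ_pow_three_mul_two_pow_le hk)
          (two_mul_sqrt_inv_eight_pow_mul_two_pow_le hk)
      _ = 1 := by norm_num
  exact mul_log_two_lt_one_div hQpos hQle
end

section
/- Fix n : ℕ and a 2-SAT formula F over n Boolean variables. Then F is satisfiable if and only if its implication digraph contains no contradictory cycle, i.e. if and only if there is no variable i such that (i, true) reaches (i, false) and (i, false) reaches (i, true) by directed paths in the implication digraph. -/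
/-- A literal over `n` Boolean variables: a variable index together with a sign
(`(i, true)` is the variable `x_i`, `(i, false)` its negation). -/
abbrev Lit (n : ℕ) := Fin n × Bool

/-- Negation of a literal. -/
def negLit {n : ℕ} (l : Lit n) : Lit n := (l.1, !l.2)

/-- An assignment satisfies a literal `(i, b)` iff it gives variable `i` the value `b`. -/
def SatLit {n : ℕ} (σ : Fin n → Bool) (l : Lit n) : Prop := σ l.1 = l.2

/-- An assignment satisfies a 2-SAT formula (a finite set of 2-clauses, each an ordered
pair of literals read as a disjunction) iff it satisfies a literal of every clause. -/
def SatFormula {n : ℕ} (σ : Fin n → Bool) (F : Finset (Lit n × Lit n)) : Prop :=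
  ∀ c ∈ F, SatLit σ c.1 ∨ SatLit σ c.2

/-- A 2-SAT formula is satisfiable iff some assignment satisfies it. -/
def Satisfiable {n : ℕ} (F : Finset (Lit n × Lit n)) : Prop :=
  ∃ σ : Fin n → Bool, SatFormula σ F

/-- The edge relation of the implication digraph of `F`: `u → v` iff some clause
`(ℓ₁, ℓ₂) ∈ F` has `u = ¬ℓ₁ ∧ v = ℓ₂` or `u = ¬ℓ₂ ∧ v = ℓ₁`. -/
def ImpEdge {n : ℕ} (F : Finset (Lit n × Lit n)) (u v : Lit n) : Prop :=
  ∃ c ∈ F, (u = negLit c.1 ∧ v = c.2) ∨ (u = negLit c.2 ∧ v = c.1)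

/-- Reachability (directed paths) in the implication digraph. -/
def Reaches {n : ℕ} (F : Finset (Lit n × Lit n)) : Lit n → Lit n → Prop :=
  Relation.ReflTransGen (ImpEdge F)

/-- Type synonym for literals, carrying the reachability preorder. -/
def LitPre (n : ℕ) (_F : Finset (Lit n × Lit n)) : Type := Lit n

instance litPreorder (n : ℕ) (F : Finset (Lit n × Lit n)) : Preorder (LitPre n F) where
  le := Reaches F
  le_refl _ := Relation.ReflTransGen.refl
  le_trans _ _ _ := Relation.ReflTransGen.trans

/-- Reachability preserves satisfaction under a satisfying assignment. -/
lemma reaches_sat {n : ℕ} {F : Finset (Lit n × Lit n)} {σ : Fin n → Bool}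
    (hσ : SatFormula σ F) {u v : Lit n} (h : Reaches F u v) (hu : SatLit σ u) :
    SatLit σ v := by
  induction h with
  | refl => exact hu
  | tail _ e ih =>
      obtain ⟨c, hc, hcase⟩ := e
      rcases hcase with ⟨h1, h2⟩ | ⟨h1, h2⟩ <;> subst h1 <;> subst h2
      · rcases hσ c hc with hs | hs
        · exact absurd hs (by simp [SatLit, negLit] at ih ⊢; simp [ih])
        · exact hs
      · rcases hσ c hc with hs | hs
        · exact hs
        · exact absurd hs (by simp [SatLit, negLit] at ih ⊢; simp [ih])

/-- A 2-SAT formula is satisfiable iff its implication digraph contains no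
contradictory cycle, i.e. iff there is no variable `i` such that `x_i` reaches `¬x_i`
and `¬x_i` reaches `x_i`. -/
theorem stmt5 (n : ℕ) (F : Finset (Lit n × Lit n)) :
    Satisfiable F ↔
      ¬ ∃ i : Fin n, Reaches F (i, true) (i, false) ∧ Reaches F (i, false) (i, true) := by
  constructor
  · rintro ⟨σ, hσ⟩ ⟨i, h1, h2⟩
    cases h : σ i with
    | true =>
        have := reaches_sat hσ h1 (show SatLit σ (i, true) from h)
        simp [SatLit] at this; simp [this] at h
    | false =>
        have := reaches_sat hσ h2 (show SatLit σ (i, false) from h)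
        simp [SatLit] at this; simp [this] at h
  · intro hno
    classical
    -- map each literal into a linear extension of the antisymmetrization
    set L : Lit n → LinearExtension (Antisymmetrization (LitPre n F) (· ≤ ·)) :=
      fun l => toLinearExtension (toAntisymmetrization (· ≤ ·) (l : LitPre n F)) with hL
    have mono : ∀ {u v : Lit n}, Reaches F u v → L u ≤ L v := by
      intro u v h
      exact toLinearExtension.monotone
        (toAntisymmetrization_le_toAntisymmetrization_iff.mpr h)
    have eqmut : ∀ {u v : Lit n}, L u = L v → Reaches F u v ∧ Reaches F v u := by
      intro u v h
      exact Quotient.exact' h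
    have hne : ∀ l : Lit n, L (negLit l) ≠ L l := by
      rintro ⟨i, b⟩ h
      obtain ⟨h1, h2⟩ := eqmut h
      cases b with
      | true => exact hno ⟨i, h2, h1⟩
      | false => exact hno ⟨i, h1, h2⟩
    set σ : Fin n → Bool := fun i => decide (L (i, false) < L (i, true)) with hσdef
    have satIff : ∀ l : Lit n, SatLit σ l ↔ L (negLit l) < L l := by
      rintro ⟨i, b⟩
      cases b with
      | true =>
          simp only [SatLit, hσdef, negLit]
          simp
      | false =>
          simp only [SatLit, hσdef, negLit]
          have := hne (i, false)
          simp only [negLit, Bool.not_false] at this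
          constructor
          · intro h
            have h' : ¬ (L (i, false) < L (i, true)) := by simpa using h
            exact lt_of_le_of_ne (not_lt.mp h') this
          · intro h
            simp only [Bool.not_false] at h
            simp [not_lt.mpr h.le, h.le]
    refine ⟨σ, ?_⟩
    intro c hc
    by_contra hcon
    push_neg at hcon
    obtain ⟨hn1, hn2⟩ := hcon
    have e1 : Reaches F (negLit c.1) c.2 :=
      Relation.ReflTransGen.single ⟨c, hc, Or.inl ⟨rfl, rfl⟩⟩
    have e2 : Reaches F (negLit c.2) c.1 :=
      Relation.ReflTransGen.single ⟨c, hc, Or.inr ⟨rfl, rfl⟩⟩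
    have l1 : L c.1 ≤ L (negLit c.1) := not_lt.mp (fun h => hn1 ((satIff c.1).mpr h))
    have l2 : L c.2 ≤ L (negLit c.2) := not_lt.mp (fun h => hn2 ((satIff c.2).mpr h))
    have : L (negLit c.2) = L c.2 :=
      le_antisymm (le_trans (mono e2) (le_trans l1 (mono e1)))
        l2
    exact hne c.2 this
end

section
/- Let α ∈ ℝ, p₁ ≥ 0 and p₀, p₂ > 0, and let M(α) = α · [[p₁, 2p₀], [2p₂, p₁]]. Then for every t ≥ 0, with 1 = (1,1)ᵀ, 1ᵀ · M(α)^t · 1 = (1 + (p₀+p₂)/(2√(p₀p₂))) · ρ₁^t + (1 − (p₀+p₂)/(2√(p₀p₂))) · ρ₂^t, where ρ₁ = α(p₁ + 2√(p₀p₂)) and ρ₂ = α(p₁ − 2√(p₀p₂)). -/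
open Matrix

-- `a ± r` are the eigenvalues of `!![a, b; c, a]`.
theorem Matrix.pow_fin_two_of_equal_diagonal {K : Type*} [Field K] [NeZero (2 : K)] (a b c r : K)
    (hr : r * r = b * c) (hr0 : r ≠ 0) (n : ℕ) :
    !![a, b; c, a] ^ n =
      !![((a + r) ^ n + (a - r) ^ n) / 2, b * ((a + r) ^ n - (a - r) ^ n) / (2 * r);
         c * ((a + r) ^ n - (a - r) ^ n) / (2 * r), ((a + r) ^ n + (a - r) ^ n) / 2] := by
  induction n with
  | zero =>
    ext i j
    fin_cases i <;> fin_cases j <;> simp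
  | succ n ih =>
    rw [pow_succ, ih]
    ext i j
    fin_cases i <;> fin_cases j <;>
      simp only [Fin.zero_eta, Fin.mk_one, Fin.isValue, mul_apply, of_apply, cons_val',
        cons_val_fin_one, cons_val_zero, cons_val_one, Fin.sum_univ_two, pow_succ] <;>
      field_simp
    · linear_combination ((a - r) ^ n - (a + r) ^ n) * hr
    · ring
    · ring
    · linear_combination ((a - r) ^ n - (a + r) ^ n) * hr

theorem stmt10_general (α p₀ p₁ p₂ : ℝ) (h0 : 0 < p₀) (h2 : 0 < p₂) (t : ℕ) :
    ∑ i : Fin 2, ∑ j : Fin 2, ((α • !![p₁, 2 * p₀; 2 * p₂, p₁]) ^ t) i j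
      = (1 + (p₀ + p₂) / (2 * Real.sqrt (p₀ * p₂)))
          * (α * (p₁ + 2 * Real.sqrt (p₀ * p₂))) ^ t
        + (1 - (p₀ + p₂) / (2 * Real.sqrt (p₀ * p₂)))
          * (α * (p₁ - 2 * Real.sqrt (p₀ * p₂))) ^ t := by
  have hs : Real.sqrt (p₀ * p₂) ≠ 0 := (Real.sqrt_pos.2 (by positivity)).ne'
  have hsq : (2 * Real.sqrt (p₀ * p₂)) * (2 * Real.sqrt (p₀ * p₂)) = (2 * p₀) * (2 * p₂) := by
    rw [mul_mul_mul_comm, Real.mul_self_sqrt (by positivity)]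
    ring
  rw [smul_pow, pow_fin_two_of_equal_diagonal _ _ _ _ hsq (by positivity)]
  simp only [Fin.sum_univ_two, Matrix.smul_apply, of_apply, cons_val', cons_val_zero, cons_val_one,
    empty_val', cons_val_fin_one, smul_eq_mul, mul_pow]
  field_simp
  ring

/-- For `M(α) = α • !![p₁, 2p₀; 2p₂, p₁]` with `p₁ ≥ 0` and `p₀, p₂ > 0`,
for every `t ≥ 0` the sum of all entries of `M(α)^t` (that is, `1ᵀ M(α)^t 1`) equals
`(1 + (p₀+p₂)/(2√(p₀p₂))) ρ₁^t + (1 - (p₀+p₂)/(2√(p₀p₂))) ρ₂^t`, where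
`ρ₁ = α(p₁ + 2√(p₀p₂))` and `ρ₂ = α(p₁ - 2√(p₀p₂))`. -/
theorem stmt10 (α p₀ p₁ p₂ : ℝ) (h1 : 0 ≤ p₁) (h0 : 0 < p₀) (h2 : 0 < p₂) (t : ℕ) :
    ∑ i : Fin 2, ∑ j : Fin 2, ((α • !![p₁, 2 * p₀; 2 * p₂, p₁]) ^ t) i j
      = (1 + (p₀ + p₂) / (2 * Real.sqrt (p₀ * p₂)))
          * (α * (p₁ + 2 * Real.sqrt (p₀ * p₂))) ^ t
        + (1 - (p₀ + p₂) / (2 * Real.sqrt (p₀ * p₂)))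
          * (α * (p₁ - 2 * Real.sqrt (p₀ * p₂))) ^ t :=
  stmt10_general α p₀ p₁ p₂ h0 h2 t
end

section
/- Let α ≥ 0, p₁ ≥ 0 and p₀, p₂ > 0, and let M(α) = α · [[p₁, 2p₀], [2p₂, p₁]]. Then for every t ≥ 0, with 1 = (1,1)ᵀ, 1ᵀ · M(α)^t · 1 ≤ C_M · ρ₁^t, where ρ₁ = α(p₁ + 2√(p₀p₂)) and C_M = 2(p₀ + p₂)/√(p₀p₂). -/
open Matrix

lemma stmt11aux (a b p₁ : ℝ) (h1 : 0 ≤ p₁) (ha : 0 < a) (hb : 0 < b) (t : ℕ) :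
    (0 ≤ ((!![p₁, 2 * (a * a); 2 * (b * b), p₁]) ^ t) 0 0 ∧
      ((!![p₁, 2 * (a * a); 2 * (b * b), p₁]) ^ t) 0 0 ≤ (p₁ + 2 * (a * b)) ^ t) ∧
    (0 ≤ ((!![p₁, 2 * (a * a); 2 * (b * b), p₁]) ^ t) 0 1 ∧
      b * ((!![p₁, 2 * (a * a); 2 * (b * b), p₁]) ^ t) 0 1 ≤ a * (p₁ + 2 * (a * b)) ^ t) ∧
    (0 ≤ ((!![p₁, 2 * (a * a); 2 * (b * b), p₁]) ^ t) 1 0 ∧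
      a * ((!![p₁, 2 * (a * a); 2 * (b * b), p₁]) ^ t) 1 0 ≤ b * (p₁ + 2 * (a * b)) ^ t) ∧
    (0 ≤ ((!![p₁, 2 * (a * a); 2 * (b * b), p₁]) ^ t) 1 1 ∧
      ((!![p₁, 2 * (a * a); 2 * (b * b), p₁]) ^ t) 1 1 ≤ (p₁ + 2 * (a * b)) ^ t) := by
  induction t with
  | zero => simp [Matrix.one_apply, ha.le, hb.le]
  | succ t ih =>
    obtain ⟨⟨n00, i00⟩, ⟨n01, i01⟩, ⟨n10, i10⟩, ⟨n11, i11⟩⟩ := ih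
    have hl : (0:ℝ) ≤ (p₁ + 2 * (a * b)) ^ t := pow_nonneg (by positivity) t
    rw [pow_succ]
    simp only [Matrix.mul_apply, Fin.sum_univ_two, pow_succ]
    simp only [Matrix.cons_val', Matrix.cons_val_zero, Matrix.cons_val_one, Matrix.head_cons,
      Matrix.empty_val', Matrix.cons_val_fin_one, Matrix.head_fin_const, Matrix.of_apply]
    refine ⟨⟨?_, ?_⟩, ⟨?_, ?_⟩, ⟨?_, ?_⟩, ⟨?_, ?_⟩⟩
    · nlinarith
    · nlinarith [mul_le_mul_of_nonneg_left i01 hb.le]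
    · nlinarith
    · nlinarith [mul_le_mul_of_nonneg_left i00 (by positivity : (0:ℝ) ≤ 2 * (a * a) * b),
        mul_le_mul_of_nonneg_left i01 h1]
    · nlinarith
    · nlinarith [mul_le_mul_of_nonneg_left i11 (by positivity : (0:ℝ) ≤ 2 * (b * b) * a),
        mul_le_mul_of_nonneg_left i10 h1]
    · nlinarith
    · nlinarith [mul_le_mul_of_nonneg_left i10 ha.le]

/-- For `M(α) = α • !![p₁, 2p₀; 2p₂, p₁]` with `α ≥ 0`, `p₁ ≥ 0` and
`p₀, p₂ > 0`, for every `t ≥ 0` the sum of all entries of `M(α)^t` (that is,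
`1ᵀ M(α)^t 1`) is at most `C_M ρ₁^t`, where `ρ₁ = α(p₁ + 2√(p₀p₂))` and
`C_M = 2(p₀+p₂)/√(p₀p₂)`. -/
theorem stmt11 (α p₀ p₁ p₂ : ℝ) (hα : 0 ≤ α) (h1 : 0 ≤ p₁) (h0 : 0 < p₀) (h2 : 0 < p₂)
    (t : ℕ) :
    ∑ i : Fin 2, ∑ j : Fin 2, ((α • !![p₁, 2 * p₀; 2 * p₂, p₁]) ^ t) i j
      ≤ 2 * (p₀ + p₂) / Real.sqrt (p₀ * p₂)
          * (α * (p₁ + 2 * Real.sqrt (p₀ * p₂))) ^ t := by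
  have ha : 0 < Real.sqrt p₀ := Real.sqrt_pos.2 h0
  have hb : 0 < Real.sqrt p₂ := Real.sqrt_pos.2 h2
  have ha2 : Real.sqrt p₀ * Real.sqrt p₀ = p₀ := Real.mul_self_sqrt h0.le
  have hb2 : Real.sqrt p₂ * Real.sqrt p₂ = p₂ := Real.mul_self_sqrt h2.le
  have hs : Real.sqrt (p₀ * p₂) = Real.sqrt p₀ * Real.sqrt p₂ := Real.sqrt_mul h0.le p₂
  set a := Real.sqrt p₀ with hadef
  set b := Real.sqrt p₂ with hbdef
  have hM : !![p₁, 2 * p₀; 2 * p₂, p₁] = !![p₁, 2 * (a * a); 2 * (b * b), p₁] := by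
    rw [ha2, hb2]
  rw [hs, hM, ← ha2, ← hb2]
  obtain ⟨⟨n00, i00⟩, ⟨n01, i01⟩, ⟨n10, i10⟩, ⟨n11, i11⟩⟩ := stmt11aux a b p₁ h1 ha hb t
  have hl : (0:ℝ) ≤ (p₁ + 2 * (a * b)) ^ t := pow_nonneg (by positivity) t
  have hat : (0:ℝ) ≤ α ^ t := pow_nonneg hα t
  rw [smul_pow]
  simp only [Matrix.smul_apply, smul_eq_mul, Fin.sum_univ_two]
  rw [div_mul_eq_mul_div, le_div_iff₀ (by positivity), mul_pow]
  have key : α ^ t * ((!![p₁, 2 * (a * a); 2 * (b * b), p₁] ^ t) 0 0 * (a * b)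
      + a * (b * (!![p₁, 2 * (a * a); 2 * (b * b), p₁] ^ t) 0 1)
      + b * (a * (!![p₁, 2 * (a * a); 2 * (b * b), p₁] ^ t) 1 0)
      + (!![p₁, 2 * (a * a); 2 * (b * b), p₁] ^ t) 1 1 * (a * b))
      ≤ α ^ t * ((p₁ + 2 * (a * b)) ^ t * (a * b) + a * (a * (p₁ + 2 * (a * b)) ^ t)
        + b * (b * (p₁ + 2 * (a * b)) ^ t) + (p₁ + 2 * (a * b)) ^ t * (a * b)) := by
    refine mul_le_mul_of_nonneg_left (add_le_add (add_le_add (add_le_add ?_ ?_) ?_) ?_) hat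
    · exact mul_le_mul_of_nonneg_right i00 (by positivity)
    · exact mul_le_mul_of_nonneg_left i01 ha.le
    · exact mul_le_mul_of_nonneg_left i10 hb.le
    · exact mul_le_mul_of_nonneg_right i11 (by positivity)
  nlinarith [key, mul_nonneg (mul_nonneg hat hl) (sq_nonneg (a - b)), mul_pos ha hb]
end

section
/- Fix integers k ≥ 4 and ℓ ≥ 2, draw ℓ i.i.d. uniform sign vectors ω₁, …, ω_ℓ ∈ (Fin k → Bool), with X_j the number of true coordinates of ω_j, and let J be the MIDDLE-HEAVY selected index. Then P(X_J = 0) = (1/2)·(2^{1−k})^ℓ, P(X_J = 1) = (1/2)·(β^ℓ − (2^{1−k})^ℓ), and P(X_J ≥ 2) = 1 − (1/2)·β^ℓ, where β = (k+1)/2^{k−1}; i.e. the MIDDLE-HEAVY projected type frequencies are p₀ = s_AS^ℓ/2, p₁ = (β^ℓ − s_AS^ℓ)/2, p₂ = 1 − β^ℓ/2. -/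
/-- Number of positive literals (true coordinates) of a sign vector. -/
def numPos (k : ℕ) (ω : Fin k → Bool) : ℕ :=
  (Finset.univ.filter fun i => ω i = true).card

/-- The class EDGE: `X = 1` or `X = k-1`. -/
abbrev InEDGE (k x : ℕ) : Prop := x = 1 ∨ x = k - 1

/-- The class MID: `2 ≤ X ≤ k-2`. -/
abbrev InMID (k x : ℕ) : Prop := 2 ≤ x ∧ x ≤ k - 2

/-- The MIDDLE-HEAVY selection rule: select the least index whose clause lies in MID,
if any; otherwise the least index in EDGE, if any; otherwise the least index. -/
def selectMH (k ℓ : ℕ) (hℓ : 0 < ℓ) (ωs : Fin ℓ → Fin k → Bool) : Fin ℓ :=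
  let mids : Finset (Fin ℓ) := Finset.univ.filter fun j => InMID k (numPos k (ωs j))
  let edges : Finset (Fin ℓ) := Finset.univ.filter fun j => InEDGE k (numPos k (ωs j))
  if h : mids.Nonempty then mids.min' h
  else if h2 : edges.Nonempty then edges.min' h2
  else ⟨0, hℓ⟩

/-!
Complementing every literal sends `X` to `k - X` and preserves the classes AS, EDGE and MID,
hence also the selected index, so `X_J = m` and `X_J = k - m` have the same probability.
Because the rule prefers MID to EDGE to AS, `X_J ∉ MID` iff no clause is in MID, and
`X_J ∈ AS` iff every clause is in AS; these events have probabilities `β^ℓ` and `s_AS^ℓ`.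
By the symmetry, `X_J = 0` carries half of the second event and `X_J ∈ {0, 1}` half of the first.
-/

open Finset

section Counting

lemma Finset.card_filter_mem_eq_sum {α β : Type*} [Fintype α] [DecidableEq β] (f : α → β)
    (S : Finset β) : #{a | f a ∈ S} = ∑ b ∈ S, #{a | f a = b} := by
  rw [card_eq_sum_card_fiberwise (f := f) (t := S) fun a ha => by simpa using ha]
  refine sum_congr rfl fun b hb => congrArg card ?_
  ext a
  simp only [mem_filter, mem_univ, true_and, and_iff_right_iff_imp]
  rintro rfl
  exact hb

lemma Finset.card_filter_eq_zero_add_card_filter_eq_one_add_card_filter_two_le {α : Type*}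
    [Fintype α] (f : α → ℕ) :
    #{a | f a = 0} + #{a | f a = 1} + #{a | 2 ≤ f a} = Fintype.card α := by
  have hlt : #{a | f a < 2} = #{a | f a = 0} + #{a | f a = 1} := by
    simpa [sum_range_succ] using card_filter_mem_eq_sum f (range 2)
  rw [← hlt, ← card_univ, ← card_filter_add_card_filter_not (s := univ) (fun a => f a < 2)]
  simp only [not_lt]

variable {k : ℕ}

lemma numPos_le (ω : Fin k → Bool) : numPos k ω ≤ k :=
  (card_filter_le _ _).trans_eq (card_fin k)

lemma numPos_not (ω : Fin k → Bool) : numPos k (fun i => !ω i) = k - numPos k ω := by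
  rw [eq_tsub_iff_add_eq_of_le (numPos_le ω)]
  simpa [numPos, add_comm] using card_filter_add_card_filter_not (s := univ) (ω · = true)

lemma card_numPos_eq (m : ℕ) : #{ω : Fin k → Bool | numPos k ω = m} = k.choose m := by
  calc _ = #(powersetCard m (univ : Finset (Fin k))) := by
        refine card_bij' (fun ω _ => ({i | ω i = true} : Finset (Fin k)))
          (fun s _ i => decide (i ∈ s)) ?_ ?_ ?_ ?_
        all_goals
          intro x hx
          simp only [mem_filter, mem_univ, true_and, mem_powersetCard, subset_univ] at hx ⊢
          simp [← hx, numPos]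
    _ = k.choose m := by simp

lemma card_numPos_mem (S : Finset ℕ) :
    #{ω : Fin k → Bool | numPos k ω ∈ S} = ∑ m ∈ S, k.choose m := by
  simp only [card_filter_mem_eq_sum, card_numPos_eq]

lemma card_forall_numPos_mem (ℓ : ℕ) (S : Finset ℕ) :
    #{ωs : Fin ℓ → Fin k → Bool | ∀ j, numPos k (ωs j) ∈ S} = (∑ m ∈ S, k.choose m) ^ ℓ := by
  rw [← card_numPos_mem, ← Fintype.card_piFinset_const]
  congr 1
  ext ωs
  simp

end Counting

section Selection

variable {k ℓ : ℕ} (hℓ : 0 < ℓ) (ωs : Fin ℓ → Fin k → Bool)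

lemma inMID_numPos_selectMH_iff :
    InMID k (numPos k (ωs (selectMH k ℓ hℓ ωs))) ↔ ∃ j, InMID k (numPos k (ωs j)) := by
  refine ⟨fun h => ⟨_, h⟩, fun ⟨j, hj⟩ => ?_⟩
  have hmid : ({j | InMID k (numPos k (ωs j))} : Finset (Fin ℓ)).Nonempty :=
    ⟨j, by simpa using hj⟩
  rw [selectMH, dif_pos hmid]
  exact (mem_filter.mp (min'_mem _ hmid)).2

lemma inEDGE_numPos_selectMH_iff (hmid : ∀ j, ¬ InMID k (numPos k (ωs j))) :
    InEDGE k (numPos k (ωs (selectMH k ℓ hℓ ωs))) ↔ ∃ j, InEDGE k (numPos k (ωs j)) := by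
  refine ⟨fun h => ⟨_, h⟩, fun ⟨j, hj⟩ => ?_⟩
  have hmid' : ¬ ({j | InMID k (numPos k (ωs j))} : Finset (Fin ℓ)).Nonempty := by
    simpa using hmid
  have hedge : ({j | InEDGE k (numPos k (ωs j))} : Finset (Fin ℓ)).Nonempty :=
    ⟨j, by simpa using hj⟩
  rw [selectMH, dif_neg hmid', dif_pos hedge]
  exact (mem_filter.mp (min'_mem _ hedge)).2

lemma not_inMID_numPos_selectMH_iff :
    ¬ InMID k (numPos k (ωs (selectMH k ℓ hℓ ωs))) ↔ ∀ j, ¬ InMID k (numPos k (ωs j)) := by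
  rw [inMID_numPos_selectMH_iff, not_exists]

lemma numPos_selectMH_eq_zero_or_eq_self_iff (hk : 2 ≤ k) :
    (numPos k (ωs (selectMH k ℓ hℓ ωs)) = 0 ∨ numPos k (ωs (selectMH k ℓ hℓ ωs)) = k) ↔
      ∀ j, numPos k (ωs j) = 0 ∨ numPos k (ωs j) = k := by
  have hAS {x : ℕ} (hx : x ≤ k) : x = 0 ∨ x = k ↔ ¬ InMID k x ∧ ¬ InEDGE k x := by omega
  simp only [hAS (numPos_le _), forall_and]
  rw [← not_inMID_numPos_selectMH_iff hℓ]
  refine and_congr_right fun hmid => ?_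
  rw [inEDGE_numPos_selectMH_iff hℓ ωs ((not_inMID_numPos_selectMH_iff hℓ ωs).mp hmid), not_exists]

lemma selectMH_not : selectMH k ℓ hℓ (fun j i => !ωs j i) = selectMH k ℓ hℓ ωs := by
  have hmid {x : ℕ} (hx : x ≤ k) : InMID k (k - x) ↔ InMID k x := by omega
  have hedge {x : ℕ} (hx : x ≤ k) : InEDGE k (k - x) ↔ InEDGE k x := by omega
  simp only [selectMH, numPos_not, hmid (numPos_le _), hedge (numPos_le _)]

omit ωs in
lemma card_numPos_selectMH_tsub {m : ℕ} (hm : m ≤ k) :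
    #{ωs : Fin ℓ → Fin k → Bool | numPos k (ωs (selectMH k ℓ hℓ ωs)) = k - m} =
      #{ωs : Fin ℓ → Fin k → Bool | numPos k (ωs (selectMH k ℓ hℓ ωs)) = m} := by
  refine card_equiv (Function.Involutive.toPerm (fun ωs j i => !ωs j i) fun ωs => by simp)
    fun ωs => ?_
  have := numPos_le (ωs (selectMH k ℓ hℓ ωs))
  simp only [mem_filter, mem_univ, true_and, Function.Involutive.toPerm, Equiv.coe_fn_mk,
    selectMH_not, numPos_not]
  omega

omit ωs in
lemma card_numPos_selectMH_eq_self :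
    #{ωs : Fin ℓ → Fin k → Bool | numPos k (ωs (selectMH k ℓ hℓ ωs)) = k} =
      #{ωs : Fin ℓ → Fin k → Bool | numPos k (ωs (selectMH k ℓ hℓ ωs)) = 0} :=
  card_numPos_selectMH_tsub hℓ (Nat.zero_le k)

end Selection

section Frequencies

lemma sum_zero_one_tsub_one_self {k : ℕ} (hk : 3 ≤ k) (f : ℕ → ℕ) :
    ∑ m ∈ ({0, 1, k - 1, k} : Finset ℕ), f m = f 0 + f 1 + f (k - 1) + f k := by
  rw [sum_insert (by simp; omega), sum_insert (by simp; omega), sum_pair (by omega)]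
  ring

variable {k ℓ : ℕ} (hℓ : 0 < ℓ)

lemma two_mul_card_numPos_selectMH_eq_zero (hk : 2 ≤ k) :
    2 * #{ωs : Fin ℓ → Fin k → Bool | numPos k (ωs (selectMH k ℓ hℓ ωs)) = 0} = 2 ^ ℓ := by
  have hcard : #{ωs : Fin ℓ → Fin k → Bool |
        numPos k (ωs (selectMH k ℓ hℓ ωs)) ∈ ({0, k} : Finset ℕ)} =
      #{ωs : Fin ℓ → Fin k → Bool | ∀ j, numPos k (ωs j) ∈ ({0, k} : Finset ℕ)} := by
    simpa using congrArg card (filter_congr fun ωs _ =>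
      numPos_selectMH_eq_zero_or_eq_self_iff hℓ ωs hk)
  rw [card_filter_mem_eq_sum, card_forall_numPos_mem, sum_pair (by omega), sum_pair (by omega),
    card_numPos_selectMH_eq_self] at hcard
  simpa [two_mul] using hcard

lemma two_mul_card_numPos_selectMH_le_one (hk : 3 ≤ k) :
    2 * (#{ωs : Fin ℓ → Fin k → Bool | numPos k (ωs (selectMH k ℓ hℓ ωs)) = 0} +
      #{ωs : Fin ℓ → Fin k → Bool | numPos k (ωs (selectMH k ℓ hℓ ωs)) = 1}) =
      (2 * (k + 1)) ^ ℓ := by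
  have hnotMID (ω : Fin k → Bool) :
      ¬ InMID k (numPos k ω) ↔ numPos k ω ∈ ({0, 1, k - 1, k} : Finset ℕ) := by
    have := numPos_le ω
    simp only [mem_insert, mem_singleton]
    omega
  have hcard : #{ωs : Fin ℓ → Fin k → Bool |
        numPos k (ωs (selectMH k ℓ hℓ ωs)) ∈ ({0, 1, k - 1, k} : Finset ℕ)} =
      #{ωs : Fin ℓ → Fin k → Bool | ∀ j, numPos k (ωs j) ∈ ({0, 1, k - 1, k} : Finset ℕ)} := by
    refine congrArg card (filter_congr fun ωs _ => ?_)
    simpa only [hnotMID] using not_inMID_numPos_selectMH_iff hℓ ωs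
  rw [card_filter_mem_eq_sum, card_forall_numPos_mem, sum_zero_one_tsub_one_self hk,
    sum_zero_one_tsub_one_self hk, card_numPos_selectMH_tsub hℓ (by omega : 1 ≤ k),
    card_numPos_selectMH_eq_self] at hcard
  rw [Nat.choose_symm (by omega : 1 ≤ k), Nat.choose_zero_right, Nat.choose_one_right,
    Nat.choose_self] at hcard
  rw [show 2 * (k + 1) = 1 + k + k + 1 by omega, ← hcard]
  ring

lemma two_zpow_one_sub_pow (k ℓ : ℕ) :
    ((2 : ℝ) ^ ((1 : ℤ) - (k : ℤ))) ^ ℓ = 2 ^ ℓ / 2 ^ (k * ℓ) := by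
  rw [zpow_sub₀ two_ne_zero, zpow_one, zpow_natCast, div_pow, pow_mul]

lemma succ_div_two_pow_pred_pow (hk : 1 ≤ k) (ℓ : ℕ) :
    (((k : ℝ) + 1) / 2 ^ (k - 1)) ^ ℓ = (2 * (k + 1)) ^ ℓ / 2 ^ (k * ℓ) := by
  obtain ⟨n, rfl⟩ := Nat.exists_eq_add_of_le' hk
  rw [Nat.add_sub_cancel, pow_mul, ← div_pow, pow_succ]
  congr 1
  field_simp

end Frequencies

/-- For `k ≥ 4`, `ℓ ≥ 2`, with `J` the MIDDLE-HEAVY selected index among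
`ℓ` i.i.d. uniform sign vectors, `P(X_J = 0) = (1/2)(2^{1-k})^ℓ`,
`P(X_J = 1) = (1/2)(β^ℓ - (2^{1-k})^ℓ)` and `P(X_J ≥ 2) = 1 - (1/2)β^ℓ`,
where `β = (k+1)/2^{k-1}` (probabilities computed as the number of favourable tuples
of sign vectors divided by `2^{kℓ}`). -/
theorem stmt13 (k ℓ : ℕ) (hk : 4 ≤ k) (hℓ : 2 ≤ ℓ) :
    ((Nat.card {ωs : Fin ℓ → Fin k → Bool //
            numPos k (ωs (selectMH k ℓ (by omega) ωs)) = 0} : ℝ) / 2 ^ (k * ℓ)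
        = (1 / 2) * ((2 : ℝ) ^ ((1 : ℤ) - (k : ℤ))) ^ ℓ) ∧
    ((Nat.card {ωs : Fin ℓ → Fin k → Bool //
            numPos k (ωs (selectMH k ℓ (by omega) ωs)) = 1} : ℝ) / 2 ^ (k * ℓ)
        = (1 / 2) * ((((k : ℝ) + 1) / 2 ^ (k - 1)) ^ ℓ
            - ((2 : ℝ) ^ ((1 : ℤ) - (k : ℤ))) ^ ℓ)) ∧
    ((Nat.card {ωs : Fin ℓ → Fin k → Bool //
            2 ≤ numPos k (ωs (selectMH k ℓ (by omega) ωs))} : ℝ) / 2 ^ (k * ℓ)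
        = 1 - (1 / 2) * (((k : ℝ) + 1) / 2 ^ (k - 1)) ^ ℓ) := by
  have hℓ0 : 0 < ℓ := by omega
  have hzero := congrArg (Nat.cast : ℕ → ℝ) <|
    two_mul_card_numPos_selectMH_eq_zero hℓ0 (by omega : 2 ≤ k)
  have hle_one := congrArg (Nat.cast : ℕ → ℝ) <|
    two_mul_card_numPos_selectMH_le_one hℓ0 (by omega : 3 ≤ k)
  have htotal := congrArg (Nat.cast : ℕ → ℝ) <|
    card_filter_eq_zero_add_card_filter_eq_one_add_card_filter_two_le
      fun ωs : Fin ℓ → Fin k → Bool => numPos k (ωs (selectMH k ℓ hℓ0 ωs))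
  simp only [Fintype.card_fun, Fintype.card_bool, Fintype.card_fin, ← pow_mul] at htotal
  push_cast at hzero hle_one htotal
  simp only [Nat.card_eq_fintype_card, Fintype.card_subtype, two_zpow_one_sub_pow,
    succ_div_two_pow_pred_pow (by omega : 1 ≤ k)]
  have h2kℓ : (2 : ℝ) ^ (k * ℓ) ≠ 0 := by positivity
  refine ⟨?_, ?_, ?_⟩ <;> field_simp <;> linarith
end
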